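/- For every r > 0 with (T−ε)·r² ≥ 10·(1+√T), one has 1/10 ≤ λ_i(r)³·λ_i''(r) ≤ 1; in particular λ_i is strictly convex on this range and λ_i''(r) ≤ 10·r^{−3} for r ≥ 4·T^{−1/2} + 4·T^{−1/4}. -/

import Mathlib

open Real

/-- `u(r) = (1-ε)+(T-ε)r²`. -/
noncomputable def uu (ε T r : ℝ) : ℝ := (1 - ε) + (T - ε) * r ^ 2

/-- The ion dispersion relation `λ_i`. -/
noncomputable def lamI (ε T r : ℝ) : ℝ :=
  (Real.sqrt ε)⁻¹ *
    Real.sqrt (((1 + ε) + (T + ε) * r ^ 2 - Real.sqrt ((uu ε T r) ^ 2 + 4 * ε)) / 2)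

/-- The electron dispersion relation `λ_e`. -/
noncomputable def lamE (ε T r : ℝ) : ℝ :=
  (Real.sqrt ε)⁻¹ *
    Real.sqrt (((1 + ε) + (T + ε) * r ^ 2 + Real.sqrt ((uu ε T r) ^ 2 + 4 * ε)) / 2)

/-- `H₁(r) = √(1+r²)`. -/
noncomputable def H1 (r : ℝ) : ℝ := Real.sqrt (1 + r ^ 2)

/-- `H_ε(r) = ε^{-1/2}√(1+Tr²)`. -/
noncomputable def Heps (ε T r : ℝ) : ℝ := (Real.sqrt ε)⁻¹ * Real.sqrt (1 + T * r ^ 2)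

/-!
Write `B = λ_i²`. Rationalising with `(v - u)(v + u) = 4ε` gives `B = 1 + r² - 2 / s`, `s = u + v`,
a form free of the cancellation by `ε`; and for any positive `B`, `(√B)³ (√B)'' = (2 B B'' - B'²) / 4`.
With `m = T - ε`, `p = 2m / (v s)`, `q = 4m²r² / v³`, `d = 2 / s`, this is
`(1 + r² - d)(1 + p - q) - r²(1 + p)²`. On the region `u ≥ 20`, and `d`, `p`, `q`, `r²p`, `r²q` are
all small, which traps the value in `[1/10, 1]`. Hence `λ_i'' > 0` on the (order-connected) region,
and `λ_i ≥ r` turns `λ_i³ λ_i'' ≤ 1` into `λ_i'' ≤ r⁻³`; the condition `r ≥ 4T^{-1/2} + 4T^{-1/4}`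
gives `T r² ≥ 16(1 + √T)`, which lies inside the region.
-/

open Filter Topology

theorem sqrt_pow_three_mul_deriv_deriv_sqrt {f f' : ℝ → ℝ} {f'' x : ℝ}
    (hf : ∀ y, HasDerivAt f (f' y) y) (hf' : HasDerivAt f' f'' x) (hx : 0 < f x) :
    √(f x) ^ 3 * deriv (deriv fun y => √(f y)) x = (2 * f x * f'' - f' x ^ 2) / 4 := by
  have h_deriv : deriv (fun y => √(f y)) =ᶠ[𝓝 x] fun y => f' y / (2 * √(f y)) := by
    filter_upwards [continuousAt_const.eventually_lt (hf x).continuousAt hx] with y hy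
    exact ((hf y).sqrt hy.ne').deriv
  have h_denom : HasDerivAt (fun y => 2 * √(f y)) (2 * (f' x / (2 * √(f x)))) x :=
    ((hf x).sqrt hx.ne').const_mul 2
  have ht : 0 < √(f x) := Real.sqrt_pos.2 hx
  rw [h_deriv.deriv_eq, (hf'.fun_div h_denom (by positivity)).deriv]
  have hsq : f x = √(f x) ^ 2 := (Real.sq_sqrt hx.le).symm
  generalize √(f x) = t at ht hsq ⊢
  rw [hsq]
  field_simp
  ring

theorem perturbed_form_bounds {p q d R : ℝ} (hp0 : 0 ≤ p) (hp : p ≤ 1 / 100)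
    (hq0 : 0 ≤ q) (hq : q ≤ 1 / 25) (hd0 : 0 ≤ d) (hd : d ≤ 1 / 20) (hR : 0 ≤ R)
    (hRp : R * p ≤ 1 / 20) (hRq : R * q ≤ 1 / 5) (hpd : 25 * p ≤ 24 * d) :
    1 / 10 ≤ (1 + R - d) * (1 + p - q) - R * (1 + p) ^ 2 ∧
      (1 + R - d) * (1 + p - q) - R * (1 + p) ^ 2 ≤ 1 := by
  have h_expand : (1 + R - d) * (1 + p - q) - R * (1 + p) ^ 2
      = 1 + p - q - d - d * p + d * q - R * p - R * q - R * p * p := by ring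
  have hRpp : R * p * p ≤ 1 / 20 * (1 / 100) := mul_le_mul hRp hp hp0 (by norm_num)
  have hdp : d * p ≤ 1 / 20 * (1 / 100) := mul_le_mul hd hp hp0 (by norm_num)
  have hdq : d * q ≤ d * (1 / 25) := mul_le_mul_of_nonneg_left hq hd0
  rw [h_expand]
  constructor
  · linarith [mul_nonneg hd0 hq0]
  · linarith [mul_nonneg hd0 hp0, mul_nonneg hR hp0, mul_nonneg hR hq0,
      mul_nonneg (mul_nonneg hR hp0) hp0]

theorem perturbed_form_bounds_of_le {m u v r : ℝ} (hm : 0 < m) (huv : u ≤ v)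
    (hmr : m * r ^ 2 ≤ u) (hu20 : 20 ≤ u) (hu2 : 100 * m ≤ u ^ 2) (hmu : 25 * m ≤ 24 * u) :
    1 / 10 ≤ (1 + r ^ 2 - 2 / (u + v)) * (1 + 2 * m / (v * (u + v)) - 4 * m ^ 2 * r ^ 2 / v ^ 3)
          - r ^ 2 * (1 + 2 * m / (v * (u + v))) ^ 2 ∧
      (1 + r ^ 2 - 2 / (u + v)) * (1 + 2 * m / (v * (u + v)) - 4 * m ^ 2 * r ^ 2 / v ^ 3)
          - r ^ 2 * (1 + 2 * m / (v * (u + v))) ^ 2 ≤ 1 := by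
  have hu : 0 < u := by linarith
  have hv : 0 < v := by linarith
  have hv3 : u ^ 3 ≤ v ^ 3 := pow_le_pow_left₀ hu.le huv 3
  have hvs : 2 * u ^ 2 ≤ v * (u + v) := by nlinarith
  refine perturbed_form_bounds (by positivity) ?_ (by positivity) ?_ (by positivity) ?_
    (by positivity) ?_ ?_ ?_
  · rw [div_le_iff₀ (by positivity)]
    nlinarith
  · rw [div_le_iff₀ (by positivity)]
    nlinarith [mul_le_mul hmr hu2 (by positivity) hu.le]
  · rw [div_le_iff₀ (by positivity)]
    nlinarith
  · rw [mul_div_assoc', div_le_iff₀ (by positivity)]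
    nlinarith [mul_le_mul hu20 hmr (by positivity) hu.le]
  · rw [mul_div_assoc', div_le_iff₀ (by positivity)]
    nlinarith [mul_le_mul hmr hmr (by positivity) hu.le, sq_nonneg u]
  · rw [mul_div_assoc', mul_div_assoc', div_le_div_iff₀ (by positivity) (by positivity)]
    nlinarith [mul_le_mul_of_nonneg_right (show 50 * m ≤ 48 * v by linarith)
      (show 0 ≤ u + v by positivity)]

theorem convex_setOf_pos_and_le_mul_sq (c : ℝ) {m : ℝ} (hm : 0 ≤ m) :
    Convex ℝ {r : ℝ | 0 < r ∧ c ≤ m * r ^ 2} :=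
  Set.OrdConnected.convex ⟨fun _ hx _ _ _ hz =>
    ⟨hx.1.trans_le hz.1, hx.2.trans (by gcongr; exacts [hx.1.le, hz.1])⟩⟩

theorem sixteen_mul_one_add_sqrt_le {T r : ℝ} (hT : 0 < T)
    (hr : 4 * T ^ (-(1 : ℝ) / 2) + 4 * T ^ (-(1 : ℝ) / 4) ≤ r) :
    16 * (1 + √T) ≤ T * r ^ 2 := by
  set x := T ^ (-(1 : ℝ) / 2)
  set y := T ^ (-(1 : ℝ) / 4)
  have hx : 0 < x := Real.rpow_pos_of_pos hT _
  have hy : 0 < y := Real.rpow_pos_of_pos hT _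
  have hy2 : y ^ 2 = x := by
    rw [← Real.rpow_natCast, ← Real.rpow_mul hT.le]
    norm_num [x]
  have hTx : T * x = √T := by
    rw [Real.sqrt_eq_rpow, ← Real.rpow_one_add' hT.le (by norm_num)]
    norm_num
  have hTx2 : T * x ^ 2 = 1 := by
    have h : (T * x) ^ 2 = T := by rw [hTx, Real.sq_sqrt hT.le]
    exact mul_left_cancel₀ hT.ne' (by linear_combination h)
  have hr2 : 16 * (x ^ 2 + y ^ 2) ≤ r ^ 2 := by nlinarith
  nlinarith

variable {ε T : ℝ}

noncomputable def vv (ε T r : ℝ) : ℝ := √(uu ε T r ^ 2 + 4 * ε)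

noncomputable def ss (ε T r : ℝ) : ℝ := uu ε T r + vv ε T r

noncomputable def lamISq (ε T r : ℝ) : ℝ := 1 + r ^ 2 - 2 / ss ε T r

noncomputable def lamISqDeriv (ε T r : ℝ) : ℝ :=
  2 * r * (1 + 2 * (T - ε) / (vv ε T r * ss ε T r))

noncomputable def lamISqDeriv2 (ε T r : ℝ) : ℝ :=
  2 * (1 + 2 * (T - ε) / (vv ε T r * ss ε T r) - 4 * (T - ε) ^ 2 * r ^ 2 / vv ε T r ^ 3)

theorem hasDerivAt_uu (r : ℝ) : HasDerivAt (uu ε T) (2 * (T - ε) * r) r := by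
  refine (((hasDerivAt_pow 2 r).const_mul (T - ε)).const_add (1 - ε)).congr_deriv ?_
  ring

theorem uu_le_vv (hε : 0 ≤ ε) (r : ℝ) : uu ε T r ≤ vv ε T r :=
  Real.le_sqrt_of_sq_le (by linarith)

theorem sq_le_lamISq {r : ℝ} (hs : 2 ≤ ss ε T r) : r ^ 2 ≤ lamISq ε T r := by
  have : 2 / ss ε T r ≤ 1 := (div_le_one (by linarith)).2 hs
  rw [lamISq]
  linarith

section PositiveEps

variable (hε : 0 < ε)
include hε

theorem vv_pos (r : ℝ) : 0 < vv ε T r := Real.sqrt_pos.2 (by positivity)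

theorem vv_sq (r : ℝ) : vv ε T r ^ 2 = uu ε T r ^ 2 + 4 * ε :=
  Real.sq_sqrt (by positivity)

theorem ss_pos (r : ℝ) : 0 < ss ε T r := by
  have : -uu ε T r < vv ε T r := Real.lt_sqrt_of_sq_lt (by rw [neg_sq]; linarith)
  rw [ss]
  linarith

theorem lamI_eq_sqrt_lamISq : lamI ε T = fun r => √(lamISq ε T r) := by
  funext r
  have hs := ss_pos (T := T) hε r
  have h_num : ((1 + ε) + (T + ε) * r ^ 2 - vv ε T r) / 2 = ε * lamISq ε T r := by
    have := vv_sq (T := T) hε r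
    unfold lamISq
    unfold ss at hs ⊢
    field_simp
    unfold uu at this ⊢
    linear_combination -this
  rw [lamI, ← vv, h_num, Real.sqrt_mul hε.le, ← mul_assoc,
    inv_mul_cancel₀ (Real.sqrt_pos.2 hε).ne', one_mul]

theorem hasDerivAt_vv (r : ℝ) :
    HasDerivAt (vv ε T) (2 * (T - ε) * r * uu ε T r / vv ε T r) r := by
  have hv := vv_pos (T := T) hε r
  refine ((((hasDerivAt_uu (ε := ε) (T := T) r).fun_pow 2).add_const (4 * ε)).sqrt
    (by positivity)).congr_deriv ?_
  unfold vv at hv ⊢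
  field_simp
  ring

theorem hasDerivAt_ss (r : ℝ) :
    HasDerivAt (ss ε T) (2 * (T - ε) * r * ss ε T r / vv ε T r) r := by
  refine ((hasDerivAt_uu r).add (hasDerivAt_vv hε r)).congr_deriv ?_
  field_simp [(vv_pos (T := T) hε r).ne']
  rw [ss]
  ring

theorem hasDerivAt_lamISq (r : ℝ) : HasDerivAt (lamISq ε T) (lamISqDeriv ε T r) r := by
  have hv := vv_pos (T := T) hε r
  have hs := ss_pos (T := T) hε r
  refine (((hasDerivAt_pow 2 r).const_add 1).sub
    ((hasDerivAt_const r (2 : ℝ)).fun_div (hasDerivAt_ss hε r) hs.ne')).congr_deriv ?_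
  rw [lamISqDeriv]
  field_simp
  ring

/-- `(v s)' = u' s² / v`, so the `r`-derivative of `1 / (v s)` is `-u' / v³`. -/
theorem hasDerivAt_lamISqDeriv (r : ℝ) :
    HasDerivAt (lamISqDeriv ε T) (lamISqDeriv2 ε T r) r := by
  have hv := vv_pos (T := T) hε r
  have hs := ss_pos (T := T) hε r
  have hvs := (hasDerivAt_vv (T := T) hε r).fun_mul (hasDerivAt_ss (T := T) hε r)
  refine (((hasDerivAt_id' (x := r)).const_mul 2).fun_mul
    (((hasDerivAt_const r (2 * (T - ε))).fun_div hvs (by positivity)).const_add 1)).congr_deriv ?_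
  rw [lamISqDeriv2]
  field_simp
  rw [ss]
  ring

theorem lamI_pow_three_mul_deriv_deriv {r : ℝ} (hr : 0 < lamISq ε T r) :
    lamI ε T r ^ 3 * deriv (deriv (lamI ε T)) r =
      (1 + r ^ 2 - 2 / ss ε T r) * (1 + 2 * (T - ε) / (vv ε T r * ss ε T r)
          - 4 * (T - ε) ^ 2 * r ^ 2 / vv ε T r ^ 3)
        - r ^ 2 * (1 + 2 * (T - ε) / (vv ε T r * ss ε T r)) ^ 2 := by
  rw [lamI_eq_sqrt_lamISq hε, sqrt_pow_three_mul_deriv_deriv_sqrt (hasDerivAt_lamISq hε)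
    (hasDerivAt_lamISqDeriv hε r) hr]
  simp only [lamISq, lamISqDeriv, lamISqDeriv2]
  ring

theorem le_lamI {r : ℝ} (hs : 2 ≤ ss ε T r) : r ≤ lamI ε T r := by
  rw [lamI_eq_sqrt_lamISq hε]
  exact Real.le_sqrt_of_sq_le (sq_le_lamISq hs)

end PositiveEps

theorem uu_bounds_of_region (hε : 0 ≤ ε) (hε' : ε ≤ 1 / 1000) (hT : 1 ≤ T) (hT' : T ≤ 100)
    {r : ℝ} (hreg : 10 * (1 + √T) ≤ (T - ε) * r ^ 2) :
    20 ≤ uu ε T r ∧ 100 * (T - ε) ≤ uu ε T r ^ 2 ∧ 25 * (T - ε) ≤ 24 * uu ε T r := by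
  have hT1 : 1 ≤ √T := Real.one_le_sqrt.2 hT
  have hT10 : √T ≤ 10 := (Real.sqrt_le_left (by norm_num)).2 (by linarith)
  have hσT : √(T - ε) ≤ √T := Real.sqrt_le_sqrt (by linarith)
  have hσ0 : 0 ≤ √(T - ε) := Real.sqrt_nonneg _
  have hσ2 : √(T - ε) ^ 2 = T - ε := Real.sq_sqrt (by linarith)
  have hu : 10 * (1 + √(T - ε)) ≤ uu ε T r := by rw [uu]; linarith
  refine ⟨by rw [uu]; linarith, by nlinarith, by nlinarith⟩

theorem lamI_pow_three_mul_deriv_deriv_mem_Icc (hε : 0 < ε) (hε' : ε ≤ 1 / 1000) (hT : 1 ≤ T)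
    (hT' : T ≤ 100) {r : ℝ} (hreg : 10 * (1 + √T) ≤ (T - ε) * r ^ 2) :
    1 / 10 ≤ lamI ε T r ^ 3 * deriv (deriv (lamI ε T)) r ∧
      lamI ε T r ^ 3 * deriv (deriv (lamI ε T)) r ≤ 1 := by
  obtain ⟨hu20, hu2, hmu⟩ := uu_bounds_of_region hε.le hε' hT hT' hreg
  have huv := uu_le_vv (T := T) hε.le r
  have hs : 2 ≤ ss ε T r := by rw [ss]; linarith
  have hr : 0 < r ^ 2 := pos_of_mul_pos_right (hreg.trans_lt' (by positivity)) (by linarith)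
  rw [lamI_pow_three_mul_deriv_deriv hε (hr.trans_le (sq_le_lamISq hs)), ss]
  exact perturbed_form_bounds_of_le (by linarith) huv (by rw [uu]; linarith) hu20 hu2 hmu

theorem lamI_nonneg (r : ℝ) : 0 ≤ lamI ε T r := by
  rw [lamI]
  positivity

theorem continuous_lamI : Continuous (lamI ε T) := by
  unfold lamI uu
  fun_prop

section Region

variable (hε : 0 < ε) (hε' : ε ≤ 1 / 1000) (hT : 1 ≤ T) (hT' : T ≤ 100)
include hε hε' hT hT'

theorem deriv_deriv_lamI_pos {r : ℝ} (hreg : 10 * (1 + √T) ≤ (T - ε) * r ^ 2) :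
    0 < deriv (deriv (lamI ε T)) r :=
  pos_of_mul_pos_right
    ((lamI_pow_three_mul_deriv_deriv_mem_Icc hε hε' hT hT' hreg).1.trans_lt' (by norm_num))
    (pow_nonneg (lamI_nonneg r) 3)

theorem deriv_deriv_lamI_le {r : ℝ} (hr : 0 < r) (hreg : 10 * (1 + √T) ≤ (T - ε) * r ^ 2) :
    deriv (deriv (lamI ε T)) r ≤ 1 / r ^ 3 := by
  obtain ⟨hu20, -, -⟩ := uu_bounds_of_region hε.le hε' hT hT' hreg
  have hs : 2 ≤ ss ε T r := by rw [ss]; linarith [uu_le_vv (T := T) hε.le r]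
  have hcube : r ^ 3 ≤ lamI ε T r ^ 3 := pow_le_pow_left₀ hr.le (le_lamI hε hs) 3
  rw [le_div_iff₀ (by positivity), mul_comm]
  calc r ^ 3 * deriv (deriv (lamI ε T)) r
      ≤ lamI ε T r ^ 3 * deriv (deriv (lamI ε T)) r :=
        mul_le_mul_of_nonneg_right hcube (deriv_deriv_lamI_pos hε hε' hT hT' hreg).le
    _ ≤ 1 := (lamI_pow_three_mul_deriv_deriv_mem_Icc hε hε' hT hT' hreg).2

end Region

theorem mem_region_of_le (hε' : ε ≤ 1 / 1000) (hT : 1 ≤ T) {r : ℝ}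
    (hr : 4 * T ^ (-(1 : ℝ) / 2) + 4 * T ^ (-(1 : ℝ) / 4) ≤ r) :
    0 < r ∧ 10 * (1 + √T) ≤ (T - ε) * r ^ 2 := by
  have hT0 : 0 < T := by linarith
  have h16 := sixteen_mul_one_add_sqrt_le hT0 hr
  refine ⟨hr.trans_lt' (by positivity), ?_⟩
  nlinarith [sq_nonneg r, Real.sqrt_nonneg T]

/-- For `r > 0` with `(T−ε)r² ≥ 10(1+√T)`: `1/10 ≤ λ_i(r)³λ_i''(r) ≤ 1`; in particular
`λ_i` is strictly convex on this range, and `λ_i''(r) ≤ 10 r⁻³` for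
`r ≥ 4T^{-1/2}+4T^{-1/4}`. -/
theorem stmt12 (ε T : ℝ) (hε : 0 < ε) (hε' : ε ≤ 1 / 1000) (hT : 1 ≤ T) (hT' : T ≤ 100) :
    (∀ r : ℝ, 0 < r → 10 * (1 + Real.sqrt T) ≤ (T - ε) * r ^ 2 →
      1 / 10 ≤ (lamI ε T r) ^ 3 * deriv (deriv (lamI ε T)) r ∧
        (lamI ε T r) ^ 3 * deriv (deriv (lamI ε T)) r ≤ 1) ∧
    StrictConvexOn ℝ {r : ℝ | 0 < r ∧ 10 * (1 + Real.sqrt T) ≤ (T - ε) * r ^ 2} (lamI ε T) ∧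
    (∀ r : ℝ, 4 * T ^ (-(1 : ℝ) / 2) + 4 * T ^ (-(1 : ℝ) / 4) ≤ r →
      deriv (deriv (lamI ε T)) r ≤ 10 / r ^ 3) := by
  refine ⟨fun r _ hreg => lamI_pow_three_mul_deriv_deriv_mem_Icc hε hε' hT hT' hreg, ?_,
    fun r hr => ?_⟩
  · refine strictConvexOn_of_deriv2_pos' (convex_setOf_pos_and_le_mul_sq _ (by linarith))
      continuous_lamI.continuousOn fun r hr => ?_
    simpa only [Function.iterate_succ, Function.iterate_zero, Function.comp_apply, id]
      using deriv_deriv_lamI_pos hε hε' hT hT' hr.2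
  · obtain ⟨hr0, hreg⟩ := mem_region_of_le hε' hT hr
    calc deriv (deriv (lamI ε T)) r ≤ 1 / r ^ 3 := deriv_deriv_lamI_le hε hε' hT hT' hr0 hreg
      _ ≤ 10 / r ^ 3 := by gcongr; norm_num
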